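/- Let α_IA, α_UI ∈ [0,1] and σ_IA, σ_UI ≥ 0 be real numbers, and let h_n and g_n be complex numbers. Define δ1 = √(α_IA(1−α_IA)α_UI(1−α_UI))·σ_IA·σ_UI, δ2 = α_IA·α_UI·σ_IA^2·σ_UI^2, and the cascaded coefficient c_n = h_n·g_n (the product of the two channel coefficients). Then the CGA-II variance δ1·(|Re(c_n)| + |Im(c_n)|) + δ2 is a lower bound on the CGA-I variance: δ1·(|Re(c_n)| + |Im(c_n)|) + δ2 ≤ α_IA(1−α_UI)·σ_IA^2·|h_n|^2 + α_UI(1−α_IA)·σ_UI^2·|g_n|^2 + δ2. -/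

import Mathlib

/-! Put `A = α_IA(1−α_UI)` and `B = α_UI(1−α_IA)`, so that `A·B = α_IA(1−α_IA)α_UI(1−α_UI)`.
With `a = √A σ_IA h_n` and `b = √B σ_UI g_n` one has `a b = δ1 c_n`, and the right-hand side
is `|a|² + |b|² + δ2`. The claim is then `|Re(ab)| + |Im(ab)| ≤ 2|ab| ≤ |a|² + |b|²`. -/

namespace Complex

theorem abs_re_add_abs_im_le_two_mul_norm (z : ℂ) : |z.re| + |z.im| ≤ 2 * ‖z‖ := by
  linarith [abs_re_le_norm z, abs_im_le_norm z]

theorem abs_re_mul_add_abs_im_mul_le (a b : ℂ) :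
    |(a * b).re| + |(a * b).im| ≤ ‖a‖ ^ 2 + ‖b‖ ^ 2 :=
  calc |(a * b).re| + |(a * b).im| ≤ 2 * ‖a‖ * ‖b‖ := by
        simpa only [norm_mul, mul_assoc] using abs_re_add_abs_im_le_two_mul_norm (a * b)
    _ ≤ ‖a‖ ^ 2 + ‖b‖ ^ 2 := two_mul_le_add_sq _ _

theorem abs_re_add_abs_im_ofReal_mul (r : ℝ) (z : ℂ) :
    |((r : ℂ) * z).re| + |((r : ℂ) * z).im| = |r| * (|z.re| + |z.im|) := by
  rw [re_ofReal_mul, im_ofReal_mul, abs_mul, abs_mul, mul_add]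

theorem norm_sqrt_mul_ofReal_mul_sq {A : ℝ} (hA : 0 ≤ A) (σ : ℝ) (z : ℂ) :
    ‖((√A * σ : ℝ) : ℂ) * z‖ ^ 2 = A * σ ^ 2 * ‖z‖ ^ 2 := by
  rw [norm_mul, norm_real, Real.norm_eq_abs, mul_pow, sq_abs, mul_pow, Real.sq_sqrt hA]

end Complex

theorem cga2_var_le_cga1_var_general
    (αIA αUI : ℝ) (hαIA : αIA ∈ Set.Icc (0 : ℝ) 1) (hαUI : αUI ∈ Set.Icc (0 : ℝ) 1)
    (σIA σUI : ℝ)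
    (hn gn : ℂ)
    (δ1 δ2 : ℝ) (cn : ℂ)
    (hδ1 : δ1 = Real.sqrt (αIA * (1 - αIA) * αUI * (1 - αUI)) * σIA * σUI)
    (hcn : cn = hn * gn) :
    δ1 * (|cn.re| + |cn.im|) + δ2 ≤
      αIA * (1 - αUI) * σIA ^ 2 * ‖hn‖ ^ 2 +
        αUI * (1 - αIA) * σUI ^ 2 * ‖gn‖ ^ 2 + δ2 := by
  obtain ⟨hαIA₀, hαIA₁⟩ := hαIA
  obtain ⟨hαUI₀, hαUI₁⟩ := hαUI
  have hA : 0 ≤ αIA * (1 - αUI) := mul_nonneg hαIA₀ (by linarith)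
  have hB : 0 ≤ αUI * (1 - αIA) := mul_nonneg hαUI₀ (by linarith)
  set a : ℂ := ((√(αIA * (1 - αUI)) * σIA : ℝ) : ℂ) * hn
  set b : ℂ := ((√(αUI * (1 - αIA)) * σUI : ℝ) : ℂ) * gn
  have hab : a * b = (δ1 : ℂ) * cn := by
    have hδ1_split : δ1 = (√(αIA * (1 - αUI)) * σIA) * (√(αUI * (1 - αIA)) * σUI) := by
      rw [hδ1, mul_mul_mul_comm, ← Real.sqrt_mul hA]
      ring_nf
    rw [hδ1_split, hcn, Complex.ofReal_mul]
    ring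
  have key := Complex.abs_re_mul_add_abs_im_mul_le a b
  rw [hab, Complex.abs_re_add_abs_im_ofReal_mul, Complex.norm_sqrt_mul_ofReal_mul_sq hA,
    Complex.norm_sqrt_mul_ofReal_mul_sq hB] at key
  have hδ1_le : δ1 * (|cn.re| + |cn.im|) ≤ |δ1| * (|cn.re| + |cn.im|) :=
    mul_le_mul_of_nonneg_right (le_abs_self δ1) (by positivity)
  linarith

/-- The CGA-II surrogate variance lower-bounds the CGA-I variance: with
`δ1 = √(α_IA(1−α_IA)α_UI(1−α_UI))·σ_IA·σ_UI`, `δ2 = α_IA α_UI σ_IA^2 σ_UI^2`, and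
the cascaded coefficient `c_n = h_n g_n`,
`δ1(|Re(c_n)| + |Im(c_n)|) + δ2 ≤ α_IA(1−α_UI)σ_IA^2|h_n|^2 + α_UI(1−α_IA)σ_UI^2|g_n|^2 + δ2`. -/
theorem cga2_var_le_cga1_var
    (αIA αUI : ℝ) (hαIA : αIA ∈ Set.Icc (0 : ℝ) 1) (hαUI : αUI ∈ Set.Icc (0 : ℝ) 1)
    (σIA σUI : ℝ) (hσIA : 0 ≤ σIA) (hσUI : 0 ≤ σUI)
    (hn gn : ℂ)
    (δ1 δ2 : ℝ) (cn : ℂ)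
    (hδ1 : δ1 = Real.sqrt (αIA * (1 - αIA) * αUI * (1 - αUI)) * σIA * σUI)
    (hδ2 : δ2 = αIA * αUI * σIA ^ 2 * σUI ^ 2)
    (hcn : cn = hn * gn) :
    δ1 * (|cn.re| + |cn.im|) + δ2 ≤
      αIA * (1 - αUI) * σIA ^ 2 * ‖hn‖ ^ 2 +
        αUI * (1 - αIA) * σUI ^ 2 * ‖gn‖ ^ 2 + δ2 :=
  cga2_var_le_cga1_var_general αIA αUI hαIA hαUI σIA σUI hn gn δ1 δ2 cn hδ1 hcn
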